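/- Narrow region principle for systems in bounded domains: Let E ⊂ {x ∈ ℝⁿ : 0 < xₙ < d} be a bounded open set, and let Ũ, Ṽ ∈ L_{2s} ∩ C^{1,1}_{loc}(E) be continuous on ℝⁿ and satisfy (−Δ)^s Ũ − b₁Ũ − c₁Ṽ ≥ 0 and (−Δ)^s Ṽ − b₂Ũ − c₂Ṽ ≥ 0 in E, with Ũ, Ṽ ≥ 0 on Eᶜ, where c₁ > 0 and b₂ > 0 on E, and b₁, b₂, c₁, c₂ are bounded above on E. Then there exists d₀ > 0 depending on n, s and the bounds on the coefficients such that if d < d₀, then Ũ ≥ 0 and Ṽ ≥ 0 on E. -/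

import Mathlib

/-!
At a negative global minimum `z` of `W` in the strip `0 < xₙ < d`, every value of the integrand
of `(−Δ)^s W(z)` is `≤ 0`, and on the ball of radius `d` centred `2d` above `z` (which lies
outside `E`, so `W ≥ 0` there) it is at most `W z / (3d)^(n+2s)`. Hence
`(−Δ)^s W(z) ≤ κ d^(-2s) W(z)` with `κ = C |B₁| / 3^(n+2s)`, `|B₁|` the volume of the unit ball.

If `U` or `V` took a negative value, the coupling `c₁, b₂ > 0` would force both to have negative
minima `m_U = U x₀`, `m_V = V x₁`, and the two inequalities at `x₀` and `x₁` give
`B m_V ≤ (Q - B) m_U` and `B m_U ≤ (Q - B) m_V` with `Q = κ d^(-2s)`. Their sum is impossible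
once `Q > 2B`, i.e. once `d` is small.
-/

open MeasureTheory

/-- The fractional Laplacian (−Δ)^s with normalizing constant C. -/
noncomputable def fracLap (n : ℕ) (s C : ℝ)
    (W : EuclideanSpace ℝ (Fin n) → ℝ) (x : EuclideanSpace ℝ (Fin n)) : ℝ :=
  C * ∫ y, (W x - W y) / ‖x - y‖ ^ ((n : ℝ) + 2 * s)

open Metric Filter Topology

lemma exists_pos_forall_lt_div_rpow {κ p : ℝ} (hκ : 0 < κ) (hp : 0 < p) (M : ℝ) :
    ∃ d₀ > 0, ∀ d, 0 < d → d < d₀ → M < κ / d ^ p := by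
  have hlim : Tendsto (fun d : ℝ => κ / d ^ p) (𝓝[>] 0) atTop := by
    have := (tendsto_rpow_neg_nhdsGT_zero (neg_lt_zero.mpr hp)).const_mul_atTop hκ
    refine this.congr' (eventually_nhdsWithin_of_forall fun d hd => ?_)
    simp only [Real.rpow_neg (le_of_lt hd), div_eq_mul_inv]
  obtain ⟨d₀, hd₀, h⟩ :=
    (nhdsGT_basis (0 : ℝ)).eventually_iff.mp (hlim.eventually_gt_atTop M)
  exact ⟨d₀, hd₀, fun d hd hdd₀ => h ⟨hd, hdd₀⟩⟩

lemma exists_mem_neg_isMin_of_nonneg_compl {X : Type*} [TopologicalSpace X] {E : Set X}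
    (hE : IsCompact (closure E)) {W : X → ℝ} (hW : Continuous W) (hext : ∀ x ∉ E, 0 ≤ W x)
    (hneg : ∃ x, W x < 0) : ∃ z ∈ E, W z < 0 ∧ ∀ y, W z ≤ W y := by
  obtain ⟨x, hx⟩ := hneg
  have hxE : x ∈ E := by_contra fun h => (hext x h).not_gt hx
  obtain ⟨z, -, hz⟩ := hE.exists_isMinOn ⟨x, subset_closure hxE⟩ hW.continuousOn
  have hzx : W z < 0 := (hz (subset_closure hxE)).trans_lt hx
  have hzE : z ∈ E := by_contra fun h => (hext z h).not_gt hzx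
  refine ⟨z, hzE, hzx, fun y => ?_⟩
  by_cases hy : y ∈ E
  · exact hz (subset_closure hy)
  · exact hzx.le.trans (hext y hy)

lemma fracLap_le_of_isMin_of_nonneg_on_ball {n : ℕ} {s C r R : ℝ}
    {W : EuclideanSpace ℝ (Fin n) → ℝ} {z c : EuclideanSpace ℝ (Fin n)} (hs : 0 ≤ s)
    (hC : 0 ≤ C) (hmin : ∀ y, W z ≤ W y) (hneg : W z < 0) (hball : ∀ y ∈ ball c r, 0 ≤ W y)
    (hR : dist z c + r ≤ R)
    (hint : Integrable fun y => (W z - W y) / ‖z - y‖ ^ ((n : ℝ) + 2 * s)) :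
    fracLap n s C W z ≤ C * (volume.real (ball c r) * (W z / R ^ ((n : ℝ) + 2 * s))) := by
  set e : ℝ := (n : ℝ) + 2 * s
  have hf_nonpos : ∀ y, (W z - W y) / ‖z - y‖ ^ e ≤ 0 := fun y =>
    div_nonpos_of_nonpos_of_nonneg (sub_nonpos.mpr (hmin y)) (by positivity)
  have hbound : ∀ y ∈ ball c r, (W z - W y) / ‖z - y‖ ^ e ≤ W z / R ^ e := by
    intro y hy
    have hzy : 0 < ‖z - y‖ :=
      norm_sub_pos_iff.mpr fun h => (hball z (h ▸ hy)).not_gt hneg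
    have hzyR : ‖z - y‖ ≤ R := by
      rw [← dist_eq_norm]
      linarith [dist_triangle z c y, mem_ball'.mp hy]
    calc (W z - W y) / ‖z - y‖ ^ e ≤ W z / ‖z - y‖ ^ e := by
          gcongr; linarith [hball y hy]
      _ ≤ W z / R ^ e := by
          simp_rw [div_eq_mul_inv]
          refine mul_le_mul_of_nonpos_left (inv_anti₀ (by positivity) ?_) hneg.le
          exact Real.rpow_le_rpow hzy.le hzyR (by positivity)
  have hglobal :
      ∫ y, (W z - W y) / ‖z - y‖ ^ e ≤ ∫ y in ball c r, (W z - W y) / ‖z - y‖ ^ e := by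
    have hsplit := integral_add_compl (measurableSet_ball (x := c) (ε := r)) hint
    have hcompl := setIntegral_nonpos (μ := volume) measurableSet_ball.compl
      fun y (_ : y ∈ (ball c r)ᶜ) => hf_nonpos y
    linarith
  calc fracLap n s C W z ≤ C * ∫ y in ball c r, (W z - W y) / ‖z - y‖ ^ e := by
        unfold fracLap; gcongr
    _ ≤ C * ∫ y in ball c r, W z / R ^ e := by
        refine mul_le_mul_of_nonneg_left ?_ hC
        exact setIntegral_mono_on hint.integrableOn
          (integrableOn_const measure_ball_lt_top.ne) measurableSet_ball hbound
    _ = C * (volume.real (ball c r) * (W z / R ^ e)) := by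
        rw [setIntegral_const, smul_eq_mul]

noncomputable def narrowConst (n : ℕ) (s C : ℝ) : ℝ :=
  C * volume.real (ball (0 : EuclideanSpace ℝ (Fin n)) 1) / 3 ^ ((n : ℝ) + 2 * s)

lemma narrowConst_pos {n : ℕ} {s C : ℝ} (hC : 0 < C) : 0 < narrowConst n s C := by
  have hball : 0 < volume.real (ball (0 : EuclideanSpace ℝ (Fin n)) 1) :=
    ENNReal.toReal_pos (measure_ball_pos volume _ one_pos).ne' measure_ball_lt_top.ne
  unfold narrowConst
  positivity

lemma volume_real_ball_euclideanSpace {n : ℕ} (c : EuclideanSpace ℝ (Fin n)) {r : ℝ}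
    (hr : 0 < r) :
    volume.real (ball c r) = r ^ n * volume.real (ball (0 : EuclideanSpace ℝ (Fin n)) 1) := by
  rw [measureReal_def, Measure.addHaar_ball_of_pos volume c hr, finrank_euclideanSpace_fin,
    ENNReal.toReal_mul, ENNReal.toReal_ofReal (by positivity), measureReal_def]

lemma fracLap_le_narrowConst_div_mul {n : ℕ} {s C d : ℝ} {i : Fin n}
    {W : EuclideanSpace ℝ (Fin n) → ℝ} {z : EuclideanSpace ℝ (Fin n)} (hs : 0 ≤ s)
    (hC : 0 ≤ C) (hd : 0 < d) (hz : 0 < z i) (hmin : ∀ y, W z ≤ W y) (hneg : W z < 0)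
    (hhalf : ∀ y : EuclideanSpace ℝ (Fin n), d ≤ y i → 0 ≤ W y)
    (hint : Integrable fun y => (W z - W y) / ‖z - y‖ ^ ((n : ℝ) + 2 * s)) :
    fracLap n s C W z ≤ narrowConst n s C / d ^ (2 * s) * W z := by
  set c := z + EuclideanSpace.single i (2 * d)
  have hball : ∀ y ∈ ball c d, 0 ≤ W y := by
    intro y hy
    have hyc : |y i - c i| < d :=
      (PiLp.norm_apply_le (y - c) i).trans_lt (mem_ball_iff_norm.mp hy)
    have hci : c i = z i + 2 * d := by simp [c]
    exact hhalf y (by linarith [(abs_lt.mp hyc).1])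
  have hzc : dist z c = 2 * d := by simp [c, dist_eq_norm, abs_of_pos hd]
  calc fracLap n s C W z
      ≤ C * (volume.real (ball c d) * (W z / (3 * d) ^ ((n : ℝ) + 2 * s))) :=
        fracLap_le_of_isMin_of_nonneg_on_ball hs hC hmin hneg hball (by linarith) hint
    _ = narrowConst n s C / d ^ (2 * s) * W z := by
        rw [volume_real_ball_euclideanSpace c hd, narrowConst,
          Real.mul_rpow (by norm_num) hd.le, Real.rpow_add hd, Real.rpow_natCast]
        have : 0 < d ^ (2 * s) := by positivity
        field_simp

lemma exists_neg_isMin_fracLap_le_of_strip {n : ℕ} {s C d : ℝ} {i : Fin n}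
    {E : Set (EuclideanSpace ℝ (Fin n))} {W : EuclideanSpace ℝ (Fin n) → ℝ} (hs : 0 ≤ s)
    (hC : 0 ≤ C) (hE : Bornology.IsBounded E) (hstrip : ∀ x ∈ E, 0 < x i ∧ x i < d)
    (hW : Continuous W) (hext : ∀ x ∉ E, 0 ≤ W x)
    (hint : ∀ x ∈ E, Integrable fun y => (W x - W y) / ‖x - y‖ ^ ((n : ℝ) + 2 * s))
    (hneg : ∃ x, W x < 0) :
    ∃ z ∈ E, W z < 0 ∧ (∀ y, W z ≤ W y) ∧
      fracLap n s C W z ≤ narrowConst n s C / d ^ (2 * s) * W z := by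
  obtain ⟨z, hzE, hzneg, hmin⟩ :=
    exists_mem_neg_isMin_of_nonneg_compl hE.isCompact_closure hW hext hneg
  have hhalf : ∀ y : EuclideanSpace ℝ (Fin n), d ≤ y i → 0 ≤ W y := fun y hy =>
    hext y fun hyE => (hstrip y hyE).2.not_ge hy
  obtain ⟨hz, hzd⟩ := hstrip z hzE
  exact ⟨z, hzE, hzneg, hmin,
    fracLap_le_narrowConst_div_mul hs hC (hz.trans hzd) hz hmin hzneg hhalf (hint z hzE)⟩

lemma nonneg_of_cooperative_system {X : Type*} {E : Set X} {U V LU LV b₁ b₂ c₁ c₂ : X → ℝ}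
    {B Q : ℝ} (hQ : 2 * B < Q)
    (hU : (∃ x, U x < 0) → ∃ z ∈ E, U z < 0 ∧ (∀ y, U z ≤ U y) ∧ LU z ≤ Q * U z)
    (hV : (∃ x, V x < 0) → ∃ z ∈ E, V z < 0 ∧ (∀ y, V z ≤ V y) ∧ LV z ≤ Q * V z)
    (hsubU : ∀ x ∈ E, 0 ≤ LU x - b₁ x * U x - c₁ x * V x)
    (hsubV : ∀ x ∈ E, 0 ≤ LV x - b₂ x * U x - c₂ x * V x)
    (hpos : ∀ x ∈ E, 0 < c₁ x ∧ 0 < b₂ x)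
    (hbnd : ∀ x ∈ E, b₁ x ≤ B ∧ b₂ x ≤ B ∧ c₁ x ≤ B ∧ c₂ x ≤ B) (x : X) :
    0 ≤ U x ∧ 0 ≤ V x := by
  have hUV : (∃ x, U x < 0) → ∃ x, V x < 0 := fun h => by
    obtain ⟨z, hzE, hz, -, hLz⟩ := hU h
    obtain ⟨hc₁, -⟩ := hpos z hzE
    obtain ⟨hb₁, -, hc₁B, -⟩ := hbnd z hzE
    have : c₁ z * V z < 0 := by nlinarith [hsubU z hzE]
    exact ⟨z, neg_of_mul_neg_right this hc₁.le⟩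
  have hVU : (∃ x, V x < 0) → ∃ x, U x < 0 := fun h => by
    obtain ⟨z, hzE, hz, -, hLz⟩ := hV h
    obtain ⟨-, hb₂⟩ := hpos z hzE
    obtain ⟨-, hb₂B, -, hc₂⟩ := hbnd z hzE
    have : b₂ z * U z < 0 := by nlinarith [hsubV z hzE]
    exact ⟨z, neg_of_mul_neg_right this hb₂.le⟩
  suffices ¬((∃ x, U x < 0) ∨ ∃ x, V x < 0) by
    simp only [not_or, not_exists, not_lt] at this
    exact ⟨this.1 x, this.2 x⟩
  intro hneg
  obtain ⟨hUneg, hVneg⟩ : (∃ x, U x < 0) ∧ ∃ x, V x < 0 :=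
    hneg.elim (fun h => ⟨h, hUV h⟩) (fun h => ⟨hVU h, h⟩)
  obtain ⟨x₀, hx₀E, hU₀, hUmin, hLU⟩ := hU hUneg
  obtain ⟨x₁, hx₁E, hV₁, hVmin, hLV⟩ := hV hVneg
  obtain ⟨hc₁, -⟩ := hpos x₀ hx₀E
  obtain ⟨-, hb₂⟩ := hpos x₁ hx₁E
  obtain ⟨hb₁B, -, hc₁B, -⟩ := hbnd x₀ hx₀E
  obtain ⟨-, hb₂B, -, hc₂B⟩ := hbnd x₁ hx₁E
  have h₀ : B * V x₁ ≤ (Q - B) * U x₀ :=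
    calc B * V x₁ ≤ c₁ x₀ * V x₁ := mul_le_mul_of_nonpos_right hc₁B hV₁.le
      _ ≤ c₁ x₀ * V x₀ := mul_le_mul_of_nonneg_left (hVmin x₀) hc₁.le
      _ ≤ (Q - b₁ x₀) * U x₀ := by linarith [hsubU x₀ hx₀E]
      _ ≤ (Q - B) * U x₀ := mul_le_mul_of_nonpos_right (by linarith) hU₀.le
  have h₁ : B * U x₀ ≤ (Q - B) * V x₁ :=
    calc B * U x₀ ≤ b₂ x₁ * U x₀ := mul_le_mul_of_nonpos_right hb₂B hU₀.le
      _ ≤ b₂ x₁ * U x₁ := mul_le_mul_of_nonneg_left (hUmin x₁) hb₂.le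
      _ ≤ (Q - c₂ x₁) * V x₁ := by linarith [hsubV x₁ hx₁E]
      _ ≤ (Q - B) * V x₁ := mul_le_mul_of_nonpos_right (by linarith) hV₁.le
  nlinarith [mul_pos (sub_pos.mpr hQ) (neg_pos.mpr (add_neg hU₀ hV₁))]

/-- Narrow region principle for systems in bounded domains (Lemma 2.1):
if the width d of E in the xₙ-direction is small enough (depending only on
n, s and the coefficient bounds), then Ũ ≥ 0 and Ṽ ≥ 0 on E. -/
theorem narrow_region_principle_bounded (n : ℕ) (hn : 1 ≤ n) (s Cns B : ℝ)
    (hs : s ∈ Set.Ioo (0:ℝ) 1) (hCns : 0 < Cns) :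
    ∃ d₀ > (0:ℝ), ∀ (d : ℝ) (E : Set (EuclideanSpace ℝ (Fin n)))
      (U V b₁ b₂ c₁ c₂ : EuclideanSpace ℝ (Fin n) → ℝ),
      0 < d → d < d₀ → IsOpen E → Bornology.IsBounded E →
      (∀ x ∈ E, 0 < x ⟨n-1, by omega⟩ ∧ x ⟨n-1, by omega⟩ < d) →
      Continuous U → Continuous V →
      Integrable (fun x => |U x| / (1 + ‖x‖ ^ ((n : ℝ) + 2 * s))) →
      Integrable (fun x => |V x| / (1 + ‖x‖ ^ ((n : ℝ) + 2 * s))) →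
      (∀ x ∈ E, Integrable (fun y => (U x - U y) / ‖x - y‖ ^ ((n : ℝ) + 2 * s))) →
      (∀ x ∈ E, Integrable (fun y => (V x - V y) / ‖x - y‖ ^ ((n : ℝ) + 2 * s))) →
      (∀ x ∈ E, 0 ≤ fracLap n s Cns U x - b₁ x * U x - c₁ x * V x) →
      (∀ x ∈ E, 0 ≤ fracLap n s Cns V x - b₂ x * U x - c₂ x * V x) →
      (∀ x ∉ E, 0 ≤ U x ∧ 0 ≤ V x) →
      (∀ x ∈ E, 0 < c₁ x ∧ 0 < b₂ x) →
      (∀ x ∈ E, b₁ x ≤ B ∧ b₂ x ≤ B ∧ c₁ x ≤ B ∧ c₂ x ≤ B) →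
      ∀ x ∈ E, 0 ≤ U x ∧ 0 ≤ V x := by
  obtain ⟨d₀, hd₀, hsmall⟩ :=
    exists_pos_forall_lt_div_rpow (narrowConst_pos (n := n) (s := s) hCns)
      (by linarith [hs.1] : (0 : ℝ) < 2 * s) (2 * B)
  refine ⟨d₀, hd₀, fun d E U V b₁ b₂ c₁ c₂ hd hdd₀ _ hEb hstrip hU hV _ _ hintU hintV
    hsubU hsubV hext hpos hbnd x _ => ?_⟩
  exact nonneg_of_cooperative_system (hsmall d hd hdd₀)
    (exists_neg_isMin_fracLap_le_of_strip hs.1.le hCns.le hEb hstrip hU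
      (fun x hx => (hext x hx).1) hintU)
    (exists_neg_isMin_fracLap_le_of_strip hs.1.le hCns.le hEb hstrip hV
      (fun x hx => (hext x hx).2) hintV)
    hsubU hsubV hpos hbnd x
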